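/- Let ρ0 and ρ1 be positive definite Hermitian D×D complex matrices. Define M = ρ1^{-1/2} √(ρ1^{1/2} ρ0 ρ1^{1/2}) ρ1^{-1/2} and N = ρ0^{-1/2} √(ρ0^{1/2} ρ1 ρ0^{1/2}) ρ0^{-1/2}. Then M N = I; that is, N = M^{-1}. -/

import Mathlib

/-
Write `A = ρ0^{1/2}`, `B = ρ1^{1/2}` and `T = (A ρ1 A)^{1/2}`. Since `T² = A B² A`, the matrix
`B A T⁻¹ A B = (B A) T⁻¹ (B A)ᴴ` is positive semidefinite and squares to `B A² B = B ρ0 B`; by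
uniqueness of positive square roots it is `(B ρ0 B)^{1/2}`. Hence `M = A T⁻¹ A` while
`N = A⁻¹ T A⁻¹`.
-/

open Matrix
open scoped ComplexOrder

/-- The square root of a positive semidefinite matrix, as `Matrix.PosSemidef.sqrt` was defined
in Mathlib of December 2024 (since removed in favour of `CFC.sqrt`). -/
noncomputable def Matrix.PosSemidef.sqrt {n : Type*} [Fintype n] [DecidableEq n] {𝕜 : Type*}
    [RCLike 𝕜] {A : Matrix n n 𝕜} (hA : A.PosSemidef) : Matrix n n 𝕜 :=
  hA.1.eigenvectorUnitary.1 * diagonal ((↑) ∘ (√·) ∘ hA.1.eigenvalues) *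
  (star hA.1.eigenvectorUnitary : Matrix n n 𝕜)

/-- The sandwiched matrix `ρ1^{1/2} ρ0 ρ1^{1/2}` is positive semidefinite. -/
noncomputable def sandwichPosSemidef {D : ℕ} {ρ0 ρ1 : Matrix (Fin D) (Fin D) ℂ}
    (hρ0 : ρ0.PosSemidef) (hρ1 : ρ1.PosSemidef) :
    (hρ1.sqrt * ρ0 * hρ1.sqrt).PosSemidef := by
  have h := hρ0.mul_mul_conjTranspose_same hρ1.sqrt
  have hs : hρ1.sqrtᴴ = hρ1.sqrt := by
    simp [Matrix.PosSemidef.sqrt, conjTranspose_mul, diagonal_conjTranspose, Matrix.mul_assoc]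
    rw [star_eq_conjTranspose, conjTranspose_conjTranspose]
    have hc : star (Complex.ofReal ∘ (fun x : ℝ => √x) ∘ hρ1.1.eigenvalues) =
        Complex.ofReal ∘ (fun x : ℝ => √x) ∘ hρ1.1.eigenvalues := by
      funext i; simp
    rw [hc]
  rwa [hs] at h

/-- The operator `M = ρ1^{-1/2} √(ρ1^{1/2} ρ0 ρ1^{1/2}) ρ1^{-1/2}`. -/
noncomputable def Mop {D : ℕ} {ρ0 ρ1 : Matrix (Fin D) (Fin D) ℂ}
    (hρ0 : ρ0.PosSemidef) (hρ1 : ρ1.PosSemidef) : Matrix (Fin D) (Fin D) ℂ :=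
  hρ1.sqrt⁻¹ * (sandwichPosSemidef hρ0 hρ1).sqrt * hρ1.sqrt⁻¹

namespace Matrix.PosSemidef

open scoped MatrixOrder

variable {n 𝕜 : Type*} [Fintype n] [DecidableEq n] [RCLike 𝕜] {A : Matrix n n 𝕜}

theorem sqrt_eq_cfcSqrt (hA : A.PosSemidef) : hA.sqrt = CFC.sqrt A := by
  rw [CFC.sqrt_eq_cfc, cfc_nnreal_eq_real _ A, hA.1.cfc_eq]
  simp only [IsHermitian.cfc, Matrix.PosSemidef.sqrt]
  congr 3
  funext i
  simp [Real.coe_sqrt, Real.coe_toNNReal', max_eq_left (hA.eigenvalues_nonneg i)]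

theorem posSemidef_sqrt (hA : A.PosSemidef) : hA.sqrt.PosSemidef := by
  rw [hA.sqrt_eq_cfcSqrt]
  exact (CFC.sqrt_nonneg A).posSemidef

theorem sqrt_mul_sqrt (hA : A.PosSemidef) : hA.sqrt * hA.sqrt = A := by
  rw [hA.sqrt_eq_cfcSqrt]
  exact CFC.sqrt_mul_sqrt_self A hA.nonneg

theorem sqrt_eq_of_sq_eq {B : Matrix n n 𝕜} (hA : A.PosSemidef) (hB : B.PosSemidef)
    (h : B ^ 2 = A) : hA.sqrt = B := by
  rw [hA.sqrt_eq_cfcSqrt, ← h, CFC.sqrt_sq B hB.nonneg]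

theorem isUnit_det_sqrt (hA : A.PosSemidef) (hu : IsUnit A.det) : IsUnit hA.sqrt.det := by
  rw [← isUnit_iff_isUnit_det, hA.sqrt_eq_cfcSqrt, CFC.isUnit_sqrt_iff A hA.nonneg,
    isUnit_iff_isUnit_det]
  exact hu

end Matrix.PosSemidef

theorem Matrix.sq_mul_inv_mul_eq {n R : Type*} [Fintype n] [DecidableEq n] [CommRing R]
    {A B T : Matrix n n R} (hT : IsUnit T.det) (hTT : T * T = A * (B * B) * A) :
    (B * A * T⁻¹ * A * B) ^ 2 = B * (A * A) * B := by
  calc (B * A * T⁻¹ * A * B) ^ 2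
      = B * A * T⁻¹ * (A * (B * B) * A) * (T⁻¹ * A * B) := by
        simp only [sq, Matrix.mul_assoc]
    _ = B * A * (T⁻¹ * T) * (T * T⁻¹) * (A * B) := by
        rw [← hTT]; simp only [Matrix.mul_assoc]
    _ = B * (A * A) * B := by
        rw [nonsing_inv_mul T hT, mul_nonsing_inv T hT]
        simp only [Matrix.mul_one, Matrix.mul_assoc]

theorem sqrt_sandwichPosSemidef_eq {D : ℕ} {ρ0 ρ1 : Matrix (Fin D) (Fin D) ℂ}
    (hρ0 : ρ0.PosSemidef) (hρ1 : ρ1.PosSemidef)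
    (hT : IsUnit (sandwichPosSemidef hρ1 hρ0).sqrt.det) :
    (sandwichPosSemidef hρ0 hρ1).sqrt =
      hρ1.sqrt * hρ0.sqrt * (sandwichPosSemidef hρ1 hρ0).sqrt⁻¹ * hρ0.sqrt * hρ1.sqrt := by
  set A := hρ0.sqrt
  set B := hρ1.sqrt
  set T := (sandwichPosSemidef hρ1 hρ0).sqrt
  have hAH : Aᴴ = A := hρ0.posSemidef_sqrt.isHermitian.eq
  have hBH : Bᴴ = B := hρ1.posSemidef_sqrt.isHermitian.eq
  apply PosSemidef.sqrt_eq_of_sq_eq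
  · have h := (sandwichPosSemidef hρ1 hρ0).posSemidef_sqrt.inv.mul_mul_conjTranspose_same (B * A)
    rwa [conjTranspose_mul, hAH, hBH, ← Matrix.mul_assoc] at h
  · have h := sq_mul_inv_mul_eq (A := A) (B := B) hT <| by
      rw [hρ1.sqrt_mul_sqrt]; exact PosSemidef.sqrt_mul_sqrt _
    rwa [hρ0.sqrt_mul_sqrt] at h

/-- For positive definite `ρ0, ρ1`, the operators
`M = ρ1^{-1/2} √(ρ1^{1/2} ρ0 ρ1^{1/2}) ρ1^{-1/2}` and
`N = ρ0^{-1/2} √(ρ0^{1/2} ρ1 ρ0^{1/2}) ρ0^{-1/2}` are mutually inverse: `M N = I`. -/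
theorem Mop_mul_Nop_eq_one {D : ℕ} (ρ0 ρ1 : Matrix (Fin D) (Fin D) ℂ)
    (hρ0 : ρ0.PosDef) (hρ1 : ρ1.PosDef) :
    Mop hρ0.posSemidef hρ1.posSemidef * Mop hρ1.posSemidef hρ0.posSemidef = 1 := by
  have hρ1u : IsUnit ρ1.det := hρ1.det_pos.ne'.isUnit
  have hA := hρ0.posSemidef.isUnit_det_sqrt hρ0.det_pos.ne'.isUnit
  have hB := hρ1.posSemidef.isUnit_det_sqrt hρ1u
  have hT := (sandwichPosSemidef hρ1.posSemidef hρ0.posSemidef).isUnit_det_sqrt <| by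
    simpa only [det_mul] using (hA.mul hρ1u).mul hA
  rw [Mop, Mop, sqrt_sandwichPosSemidef_eq _ _ hT]
  simp only [Matrix.mul_assoc]
  rw [nonsing_inv_mul_cancel_left _ _ hB, mul_nonsing_inv_cancel_left _ _ hB,
    mul_nonsing_inv_cancel_left _ _ hA, nonsing_inv_mul_cancel_left _ _ hT, mul_nonsing_inv _ hA]
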